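/- arXiv:1604.04656 — 4 statements merged into one kernel-verified Lean document; each statement's English description precedes it below -/
import Mathlib

section
/- Under the MAR assumption, the terms R = 1_{T ≥ c} ρ − β and S = V · 1_{T ≥ c} · (D − ρ) are uncorrelated, where β = ℙ(T ≥ c, D = 1): both have mean zero and E[R · S] = 0, so Cov(R, S) = 0. -/
/-!
Write `I = 1_{T ≥ c}` and `ρ = E[D | 𝒢]`. Since `I` is `𝒢`-measurable, the tower property gives
`E[I ρ] = E[I D] = β`, so `R` is centred. For `0/1`-valued `V` and `D`, conditional independence
given `𝒢` yields the product rule `E[V D | 𝒢] = E[V | 𝒢] ρ`, hence `E[V (D - ρ) | 𝒢] = 0`. Pulling out the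
bounded `𝒢`-measurable factors `I` and `R I` then gives `E[S] = 0` and `E[R S] = 0`.
-/

open MeasureTheory ProbabilityTheory

section

variable {Ω : Type*} {m mΩ : MeasurableSpace Ω} {μ : Measure Ω}

lemma eq_indicator_preimage_one {X : Ω → ℝ} (hX : ∀ ω, X ω = 0 ∨ X ω = 1) :
    X = (X ⁻¹' {1}).indicator fun _ => 1 := by
  funext ω
  rcases hX ω with h | h <;> simp [h]

lemma condExp_mul_ae_eq_mul_condExp_of_condIndepFun [StandardBorelSpace Ω]
    {hm : m ≤ mΩ} [IsFiniteMeasure μ] {X Y : Ω → ℝ} (hX : Measurable X) (hY : Measurable Y)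
    (hX01 : ∀ ω, X ω = 0 ∨ X ω = 1) (hY01 : ∀ ω, Y ω = 0 ∨ Y ω = 1)
    (hXY : CondIndepFun m hm X Y μ) :
    μ[X * Y | m] =ᵐ[μ] μ[X | m] * μ[Y | m] := by
  have hprod : X * Y = (X ⁻¹' {1} ∩ Y ⁻¹' {1}).indicator fun _ => 1 := by
    funext ω
    rcases hX01 ω with hx | hx <;> rcases hY01 ω with hy | hy <;> simp [hx, hy]
  have h := (condIndepFun_iff_condExp_inter_preimage_eq_mul hX hY).mp hXY {1} {1}
    (measurableSet_singleton 1) (measurableSet_singleton 1)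
  rwa [← hprod, ← eq_indicator_preimage_one hX01, ← eq_indicator_preimage_one hY01] at h

lemma condExp_mul_sub_condExp_ae_eq_zero [IsFiniteMeasure μ] {V D : Ω → ℝ}
    (hV : AEStronglyMeasurable V μ) (C : ℝ) (hVC : ∀ᵐ ω ∂μ, ‖V ω‖ ≤ C) (hD : Integrable D μ)
    (hVD : μ[V * D | m] =ᵐ[μ] μ[V | m] * μ[D | m]) :
    μ[V * (D - μ[D | m]) | m] =ᵐ[μ] 0 := by
  have hV_int : Integrable V μ := .of_bound hV C hVC
  have hVD_int : Integrable (V * D) μ := hD.bdd_mul hV hVC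
  have hVρ_int : Integrable (V * μ[D | m]) μ := integrable_condExp.bdd_mul hV hVC
  have hpull : μ[V * μ[D | m] | m] =ᵐ[μ] μ[V | m] * μ[D | m] :=
    condExp_mul_of_stronglyMeasurable_right stronglyMeasurable_condExp hVρ_int hV_int
  rw [mul_sub]
  filter_upwards [condExp_sub hVD_int hVρ_int m, hVD, hpull] with ω h hVD hpull
  simp [h, hVD, hpull]

lemma integral_mul_condExp_of_bound (hm : m ≤ mΩ) [IsFiniteMeasure μ] {f g : Ω → ℝ}
    (hg : StronglyMeasurable[m] g) (hf : Integrable f μ) (C : ℝ)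
    (hgC : ∀ᵐ ω ∂μ, ‖g ω‖ ≤ C) :
    ∫ ω, g ω * (μ[f | m]) ω ∂μ = ∫ ω, g ω * f ω ∂μ :=
  calc ∫ ω, g ω * (μ[f | m]) ω ∂μ = ∫ ω, (μ[g * f | m]) ω ∂μ :=
        integral_congr_ae (condExp_stronglyMeasurable_mul_of_bound hm hg hf C hgC).symm
    _ = ∫ ω, g ω * f ω ∂μ := integral_condExp hm

lemma integral_mul_mul_sub_condExp_eq_zero (hm : m ≤ mΩ) [IsFiniteMeasure μ] {g V D : Ω → ℝ}
    (hg : StronglyMeasurable[m] g) (C : ℝ) (hgC : ∀ᵐ ω ∂μ, ‖g ω‖ ≤ C)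
    (hV : AEStronglyMeasurable V μ) (C' : ℝ) (hVC : ∀ᵐ ω ∂μ, ‖V ω‖ ≤ C') (hD : Integrable D μ)
    (hVD : μ[V * D | m] =ᵐ[μ] μ[V | m] * μ[D | m]) :
    ∫ ω, g ω * (V ω * (D ω - (μ[D | m]) ω)) ∂μ = 0 := by
  have hS_int : Integrable (V * (D - μ[D | m])) μ :=
    (hD.sub integrable_condExp).bdd_mul hV hVC
  calc ∫ ω, g ω * (V ω * (D ω - (μ[D | m]) ω)) ∂μ
      = ∫ ω, g ω * (μ[V * (D - μ[D | m]) | m]) ω ∂μ :=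
        (integral_mul_condExp_of_bound hm hg hS_int C hgC).symm
    _ = ∫ ω, g ω * (0 : Ω → ℝ) ω ∂μ := integral_congr_ae <| by
        filter_upwards [condExp_mul_sub_condExp_ae_eq_zero hV C' hVC hD hVD] with ω h
        rw [h]
    _ = 0 := by simp

lemma integral_ite_mul_eq_measureReal {P : Ω → Prop} [DecidablePred P] {D : Ω → ℝ}
    (hP : MeasurableSet {ω | P ω}) (hD : Measurable D) (hD01 : ∀ ω, D ω = 0 ∨ D ω = 1) :
    ∫ ω, (if P ω then 1 else 0) * D ω ∂μ = μ.real {ω | P ω ∧ D ω = 1} := by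
  have hPD : (fun ω => (if P ω then 1 else 0) * D ω) = {ω | P ω ∧ D ω = 1}.indicator 1 := by
    funext ω
    rcases hD01 ω with h | h <;> by_cases hω : P ω <;> simp [h, hω]
  rw [hPD]
  exact integral_indicator_one (hP.inter (hD (measurableSet_singleton 1)))

lemma integral_ite_mul_condExp_eq_measureReal (hm : m ≤ mΩ) [IsFiniteMeasure μ]
    {P : Ω → Prop} [DecidablePred P] {D : Ω → ℝ} (hP : MeasurableSet[m] {ω | P ω})
    (hD : Measurable D) (hD01 : ∀ ω, D ω = 0 ∨ D ω = 1) :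
    ∫ ω, (if P ω then 1 else 0) * (μ[D | m]) ω ∂μ = μ.real {ω | P ω ∧ D ω = 1} := by
  have hD_int : Integrable D μ := .of_bound hD.aestronglyMeasurable 1 <| ae_of_all _ fun ω => by
    rcases hD01 ω with h | h <;> simp [h]
  rw [integral_mul_condExp_of_bound hm (stronglyMeasurable_const.ite hP stronglyMeasurable_const)
    hD_int 1 (ae_of_all _ fun ω => by split_ifs <;> simp)]
  exact integral_ite_mul_eq_measureReal (hm _ hP) hD hD01

end

theorem mar_R_S_uncorrelated_general
    {Ω : Type*} [mΩ : MeasurableSpace Ω] [StandardBorelSpace Ω]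
    (μ : Measure Ω) [IsProbabilityMeasure μ] {d : ℕ}
    (T : Ω → ℝ) (A : Ω → (Fin d → ℝ)) (D V : Ω → ℝ)
    (hD : Measurable D) (hV : Measurable V)
    (hDval : ∀ ω, D ω = 0 ∨ D ω = 1) (hVval : ∀ ω, V ω = 0 ∨ V ω = 1)
    (𝒢 : MeasurableSpace Ω)
    (h𝒢 : 𝒢 = MeasurableSpace.comap (fun ω => (T ω, A ω)) inferInstance)
    (h𝒢le : 𝒢 ≤ mΩ)
    (MAR : CondIndepFun (mΩ := mΩ) 𝒢 h𝒢le V D μ) (c : ℝ) :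
    (∫ ω, ((if c ≤ T ω then (1 : ℝ) else 0) * (μ[D | 𝒢]) ω
        - (μ {ω' | c ≤ T ω' ∧ D ω' = 1}).toReal) ∂μ = 0) ∧
    (∫ ω, V ω * (if c ≤ T ω then (1 : ℝ) else 0) * (D ω - (μ[D | 𝒢]) ω) ∂μ = 0) ∧
    (∫ ω, ((if c ≤ T ω then (1 : ℝ) else 0) * (μ[D | 𝒢]) ω
          - (μ {ω' | c ≤ T ω' ∧ D ω' = 1}).toReal)
        * (V ω * (if c ≤ T ω then (1 : ℝ) else 0) * (D ω - (μ[D | 𝒢]) ω)) ∂μ = 0) := by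
  set ρ := μ[D | 𝒢]
  set β := (μ {ω' | c ≤ T ω' ∧ D ω' = 1}).toReal
  set I : Ω → ℝ := fun ω => if c ≤ T ω then 1 else 0
  have hT : Measurable[𝒢] T := h𝒢 ▸ measurable_fst.comp (comap_measurable _)
  have hI : StronglyMeasurable[𝒢] I := stronglyMeasurable_const.indicator (hT measurableSet_Ici)
  have hI1 (ω : Ω) : ‖I ω‖ ≤ 1 := by unfold I; split_ifs <;> simp
  have hD1 (ω : Ω) : ‖D ω‖ ≤ 1 := by rcases hDval ω with h | h <;> simp [h]
  have hV1 (ω : Ω) : ‖V ω‖ ≤ 1 := by rcases hVval ω with h | h <;> simp [h]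
  have hD_int : Integrable D μ := .of_bound hD.aestronglyMeasurable 1 (ae_of_all _ hD1)
  have hVD := condExp_mul_ae_eq_mul_condExp_of_condIndepFun hV hD hVval hDval MAR
  have key {g : Ω → ℝ} (hg : StronglyMeasurable[𝒢] g) (C : ℝ) (hgC : ∀ᵐ ω ∂μ, ‖g ω‖ ≤ C) :
      ∫ ω, g ω * (V ω * (D ω - ρ ω)) ∂μ = 0 :=
    integral_mul_mul_sub_condExp_eq_zero h𝒢le hg C hgC
      hV.aestronglyMeasurable 1 (ae_of_all _ hV1) hD_int hVD
  refine ⟨?_, ?_, ?_⟩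
  · have hIρ : Integrable (fun ω => I ω * ρ ω) μ :=
      integrable_condExp.bdd_mul (hI.mono h𝒢le).aestronglyMeasurable (ae_of_all _ hI1)
    have hβ : ∫ ω, I ω * ρ ω ∂μ = β := integral_ite_mul_condExp_eq_measureReal (P := (c ≤ T ·))
      h𝒢le (hT measurableSet_Ici) hD hDval
    rw [integral_sub hIρ (integrable_const β), hβ]
    simp
  · exact (integral_congr_ae (ae_of_all _ fun ω => by ring)).trans (key hI 1 (ae_of_all _ hI1))
  · have hRI : StronglyMeasurable[𝒢] fun ω => (I ω * ρ ω - β) * I ω :=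
      ((hI.mul stronglyMeasurable_condExp).sub stronglyMeasurable_const).mul hI
    have hRI_bound : ∀ᵐ ω ∂μ, ‖(I ω * ρ ω - β) * I ω‖ ≤ (1 * 1 + ‖β‖) * 1 := by
      filter_upwards [ae_bdd_norm_condExp_of_ae_bdd_norm (m := 𝒢) (ae_of_all μ hD1)] with ω hρ
      exact norm_mul_le_of_le (norm_sub_le_of_le (norm_mul_le_of_le (hI1 ω) hρ) le_rfl) (hI1 ω)
    exact (integral_congr_ae (ae_of_all _ fun ω => by ring)).trans (key hRI _ hRI_bound)

/-- Under MAR, the terms `R = 1_{T ≥ c} ρ − β` and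
`S = V · 1_{T ≥ c} · (D − ρ)`, with `β = ℙ(T ≥ c, D = 1)`, are uncorrelated:
both have mean zero and `E[R · S] = 0`, so `Cov(R, S) = 0`. -/
theorem mar_R_S_uncorrelated
    {Ω : Type*} [mΩ : MeasurableSpace Ω] [StandardBorelSpace Ω] [Nonempty Ω]
    (μ : Measure Ω) [IsProbabilityMeasure μ] {d : ℕ}
    (T : Ω → ℝ) (A : Ω → (Fin d → ℝ)) (D V : Ω → ℝ)
    (hT : Measurable T) (hA : Measurable A) (hD : Measurable D) (hV : Measurable V)
    (hDval : ∀ ω, D ω = 0 ∨ D ω = 1) (hVval : ∀ ω, V ω = 0 ∨ V ω = 1)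
    (𝒢 : MeasurableSpace Ω)
    (h𝒢 : 𝒢 = MeasurableSpace.comap (fun ω => (T ω, A ω)) inferInstance)
    (h𝒢le : 𝒢 ≤ mΩ)
    (MAR : CondIndepFun (mΩ := mΩ) 𝒢 h𝒢le V D μ) (c : ℝ) :
    (∫ ω, ((if c ≤ T ω then (1 : ℝ) else 0) * (μ[D | 𝒢]) ω
        - (μ {ω' | c ≤ T ω' ∧ D ω' = 1}).toReal) ∂μ = 0) ∧
    (∫ ω, V ω * (if c ≤ T ω then (1 : ℝ) else 0) * (D ω - (μ[D | 𝒢]) ω) ∂μ = 0) ∧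
    (∫ ω, ((if c ≤ T ω then (1 : ℝ) else 0) * (μ[D | 𝒢]) ω
          - (μ {ω' | c ≤ T ω' ∧ D ω' = 1}).toReal)
        * (V ω * (if c ≤ T ω then (1 : ℝ) else 0) * (D ω - (μ[D | 𝒢]) ω)) ∂μ = 0) :=
  mar_R_S_uncorrelated_general (mΩ := mΩ) μ T A D V hD hV hDval hVval 𝒢 h𝒢 h𝒢le MAR c
end

section
/- Under the MAR assumption, for cut points c₁ < c₂ and mutually exclusive class indicators D₁, D₂ (D₁D₂ = 0 a.s.), the two mean-zero terms V·1_{T ≥ c₁}·(D₁ − ρ₁) and V·1_{c₁ ≤ T < c₂}·(D₂ − ρ₂) have covariance E[ (V 1_{T ≥ c₁}(D₁ − ρ₁)) · (V 1_{c₁ ≤ T < c₂}(D₂ − ρ₂)) ] = −E[ π · 1_{c₁ ≤ T < c₂} · ρ₁ ρ₂ ]. -/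
open MeasureTheory ProbabilityTheory

/-!
Since `V² = V` and `1_{T ≥ c₁} 1_{c₁ ≤ T < c₂} = 1_{c₁ ≤ T < c₂}`, the left side is the integral of
`V (D₁ - ρ₁)(D₂ - ρ₂)` over the `𝒢`-measurable event `{c₁ ≤ T < c₂}`, so it may be replaced by its
conditional expectation given `𝒢`. Expanding, and using `D₁ D₂ = 0`, that conditional expectation is
`- ρ₂ E[V D₁ | 𝒢] - ρ₁ E[V D₂ | 𝒢] + ρ₁ ρ₂ π`, and MAR factorises `E[V D_k | 𝒢] = π ρ_k`.
-/

section ZeroOne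

variable {Ω : Type*} {m mΩ : MeasurableSpace Ω} {μ : Measure Ω} {X : Ω → ℝ}

lemma ae_norm_le_one_of_eq_zero_or_eq_one (hX01 : ∀ ω, X ω = 0 ∨ X ω = 1) :
    ∀ᵐ ω ∂μ, ‖X ω‖ ≤ 1 :=
  ae_of_all _ fun ω => by rcases hX01 ω with h | h <;> simp [h]

lemma integrable_of_eq_zero_or_eq_one [IsFiniteMeasure μ] (hX : Measurable X)
    (hX01 : ∀ ω, X ω = 0 ∨ X ω = 1) : Integrable X μ :=
  .of_bound hX.aestronglyMeasurable 1 (ae_norm_le_one_of_eq_zero_or_eq_one hX01)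

lemma indicator_preimage_one_eq_self (hX01 : ∀ ω, X ω = 0 ∨ X ω = 1) :
    (X ⁻¹' {1}).indicator 1 = X := by
  funext ω
  rcases hX01 ω with h | h <;> simp [h]

lemma ae_norm_condExp_le_one (hX01 : ∀ ω, X ω = 0 ∨ X ω = 1) :
    ∀ᵐ ω ∂μ, ‖μ[X | m] ω‖ ≤ 1 :=
  ae_bdd_abs_condExp_of_ae_bdd_abs (ae_norm_le_one_of_eq_zero_or_eq_one hX01)

lemma integrable_mul_sub_condExp_mul_sub_condExp [IsFiniteMeasure μ] {V D₁ D₂ : Ω → ℝ}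
    (hV : Measurable V) (hD₁ : Measurable D₁) (hD₂ : Measurable D₂)
    (hV01 : ∀ ω, V ω = 0 ∨ V ω = 1) (hD₁01 : ∀ ω, D₁ ω = 0 ∨ D₁ ω = 1)
    (hD₂01 : ∀ ω, D₂ ω = 0 ∨ D₂ ω = 1) :
    Integrable (fun ω => V ω * (D₁ ω - μ[D₁ | m] ω) * (D₂ ω - μ[D₂ | m] ω)) μ := by
  refine ((integrable_of_eq_zero_or_eq_one hD₂ hD₂01).sub integrable_condExp).bdd_mul (c := 1 * 2)
    (hV.aestronglyMeasurable.mul (hD₁.aestronglyMeasurable.sub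
      (integrable_condExp (μ := μ) (m := m)).aestronglyMeasurable)) ?_
  filter_upwards [ae_norm_le_one_of_eq_zero_or_eq_one (μ := μ) hV01,
    ae_norm_le_one_of_eq_zero_or_eq_one (μ := μ) hD₁01,
    ae_norm_condExp_le_one (μ := μ) (m := m) hD₁01] with ω hV hD hρ
  rw [norm_mul]
  exact mul_le_mul hV ((norm_sub_le _ _).trans (by linarith)) (norm_nonneg _) zero_le_one

end ZeroOne

namespace ProbabilityTheory

variable {Ω : Type*} {m mΩ : MeasurableSpace Ω} [StandardBorelSpace Ω] {hm : m ≤ mΩ}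
  {μ : Measure Ω} [IsFiniteMeasure μ]

theorem CondIndepFun.condExp_mul_of_eq_zero_or_eq_one {X Y : Ω → ℝ}
    (hXY : CondIndepFun m hm X Y μ) (hX : Measurable X) (hY : Measurable Y)
    (hX01 : ∀ ω, X ω = 0 ∨ X ω = 1) (hY01 : ∀ ω, Y ω = 0 ∨ Y ω = 1) :
    μ[X * Y | m] =ᵐ[μ] μ[X | m] * μ[Y | m] := by
  have h := (condIndepFun_iff_condExp_inter_preimage_eq_mul hX hY).mp hXY {1} {1}
    (measurableSet_singleton 1) (measurableSet_singleton 1)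
  rwa [show (fun _ : Ω => (1 : ℝ)) = 1 from rfl, Set.inter_indicator_one,
    indicator_preimage_one_eq_self hX01, indicator_preimage_one_eq_self hY01] at h

theorem condExp_mul_sub_condExp_mul_sub_condExp_of_condIndepFun {V D₁ D₂ : Ω → ℝ}
    (hV : Measurable V) (hD₁ : Measurable D₁) (hD₂ : Measurable D₂)
    (hV01 : ∀ ω, V ω = 0 ∨ V ω = 1) (hD₁01 : ∀ ω, D₁ ω = 0 ∨ D₁ ω = 1)
    (hD₂01 : ∀ ω, D₂ ω = 0 ∨ D₂ ω = 1) (hexcl : ∀ᵐ ω ∂μ, D₁ ω * D₂ ω = 0)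
    (hVD₁ : CondIndepFun m hm V D₁ μ) (hVD₂ : CondIndepFun m hm V D₂ μ) :
    μ[fun ω => V ω * (D₁ ω - μ[D₁ | m] ω) * (D₂ ω - μ[D₂ | m] ω) | m]
      =ᵐ[μ] fun ω => -(μ[V | m] ω * (μ[D₁ | m] ω * μ[D₂ | m] ω)) := by
  set ρ₁ := μ[D₁ | m]
  set ρ₂ := μ[D₂ | m]
  have hVint := integrable_of_eq_zero_or_eq_one (μ := μ) hV hV01
  have hVD₁int : Integrable (V * D₁) μ := (integrable_of_eq_zero_or_eq_one hD₁ hD₁01).bdd_mul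
    hV.aestronglyMeasurable (ae_norm_le_one_of_eq_zero_or_eq_one hV01)
  have hVD₂int : Integrable (V * D₂) μ := (integrable_of_eq_zero_or_eq_one hD₂ hD₂01).bdd_mul
    hV.aestronglyMeasurable (ae_norm_le_one_of_eq_zero_or_eq_one hV01)
  have hρ₁ : ∀ᵐ ω ∂μ, ‖ρ₁ ω‖ ≤ 1 := ae_norm_condExp_le_one hD₁01
  have hρ₂ : ∀ᵐ ω ∂μ, ‖ρ₂ ω‖ ≤ 1 := ae_norm_condExp_le_one hD₂01
  have hρ₁₂ : ∀ᵐ ω ∂μ, ‖(ρ₁ * ρ₂) ω‖ ≤ 1 := by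
    filter_upwards [hρ₁, hρ₂] with ω h₁ h₂
    rw [Pi.mul_apply, norm_mul]
    exact mul_le_one₀ h₁ (norm_nonneg _) h₂
  have hsm₁ : StronglyMeasurable[m] ρ₁ := stronglyMeasurable_condExp
  have hsm₂ : StronglyMeasurable[m] ρ₂ := stronglyMeasurable_condExp
  have hae₁ : AEStronglyMeasurable ρ₁ μ := integrable_condExp.aestronglyMeasurable
  have hae₂ : AEStronglyMeasurable ρ₂ μ := integrable_condExp.aestronglyMeasurable
  have hexpand : (fun ω => V ω * (D₁ ω - ρ₁ ω) * (D₂ ω - ρ₂ ω))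
      =ᵐ[μ] ρ₁ * ρ₂ * V - ρ₂ * (V * D₁) - ρ₁ * (V * D₂) := by
    filter_upwards [hexcl] with ω h
    simp only [Pi.sub_apply, Pi.mul_apply]
    linear_combination V ω * h
  calc μ[fun ω => V ω * (D₁ ω - ρ₁ ω) * (D₂ ω - ρ₂ ω) | m]
      =ᵐ[μ] μ[ρ₁ * ρ₂ * V - ρ₂ * (V * D₁) - ρ₁ * (V * D₂) | m] := condExp_congr_ae hexpand
    _ =ᵐ[μ] μ[ρ₁ * ρ₂ * V | m] - μ[ρ₂ * (V * D₁) | m] - μ[ρ₁ * (V * D₂) | m] := by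
      have hI₁ : Integrable (ρ₁ * ρ₂ * V) μ := hVint.bdd_mul (hae₁.mul hae₂) hρ₁₂
      have hI₂ : Integrable (ρ₂ * (V * D₁)) μ := hVD₁int.bdd_mul hae₂ hρ₂
      have hI₃ : Integrable (ρ₁ * (V * D₂)) μ := hVD₂int.bdd_mul hae₁ hρ₁
      exact (condExp_sub (hI₁.sub hI₂) hI₃ m).trans ((condExp_sub hI₁ hI₂ m).sub .rfl)
    _ =ᵐ[μ] ρ₁ * ρ₂ * μ[V | m] - ρ₂ * μ[V * D₁ | m] - ρ₁ * μ[V * D₂ | m] :=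
      ((condExp_stronglyMeasurable_mul_of_bound hm (hsm₁.mul hsm₂) hVint 1 hρ₁₂).sub
        (condExp_stronglyMeasurable_mul_of_bound hm hsm₂ hVD₁int 1 hρ₂)).sub
        (condExp_stronglyMeasurable_mul_of_bound hm hsm₁ hVD₂int 1 hρ₁)
    _ =ᵐ[μ] ρ₁ * ρ₂ * μ[V | m] - ρ₂ * (μ[V | m] * ρ₁) - ρ₁ * (μ[V | m] * ρ₂) := by
      filter_upwards [hVD₁.condExp_mul_of_eq_zero_or_eq_one hV hD₁ hV01 hD₁01,
        hVD₂.condExp_mul_of_eq_zero_or_eq_one hV hD₂ hV01 hD₂01] with ω h₁ h₂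
      simp only [Pi.sub_apply, Pi.mul_apply] at h₁ h₂ ⊢
      rw [h₁, h₂]
    _ = fun ω => -(μ[V | m] ω * (ρ₁ ω * ρ₂ ω)) := by
      funext ω
      simp only [Pi.sub_apply, Pi.mul_apply]
      ring

end ProbabilityTheory

theorem mar_covariance_S_terms_general
    {Ω : Type*} [mΩ : MeasurableSpace Ω] [StandardBorelSpace Ω]
    (μ : Measure Ω) [IsProbabilityMeasure μ] {d : ℕ}
    (T : Ω → ℝ) (A : Ω → (Fin d → ℝ)) (D₁ D₂ V : Ω → ℝ)
    (hD₁ : Measurable D₁) (hD₂ : Measurable D₂) (hV : Measurable V)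
    (hD₁val : ∀ ω, D₁ ω = 0 ∨ D₁ ω = 1) (hD₂val : ∀ ω, D₂ ω = 0 ∨ D₂ ω = 1)
    (hVval : ∀ ω, V ω = 0 ∨ V ω = 1)
    (hexcl : ∀ᵐ ω ∂μ, D₁ ω * D₂ ω = 0)
    (𝒢 : MeasurableSpace Ω)
    (h𝒢 : 𝒢 = MeasurableSpace.comap (fun ω => (T ω, A ω)) inferInstance)
    (h𝒢le : 𝒢 ≤ mΩ)
    (MAR : CondIndepFun (mΩ := mΩ) 𝒢 h𝒢le V (fun ω => (D₁ ω, D₂ ω)) μ)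
    (c₁ c₂ : ℝ) :
    ∫ ω, (V ω * (if c₁ ≤ T ω then (1 : ℝ) else 0) * (D₁ ω - (μ[D₁ | 𝒢]) ω))
        * (V ω * (if c₁ ≤ T ω ∧ T ω < c₂ then (1 : ℝ) else 0) * (D₂ ω - (μ[D₂ | 𝒢]) ω)) ∂μ
      = - ∫ ω, (μ[V | 𝒢]) ω * (if c₁ ≤ T ω ∧ T ω < c₂ then (1 : ℝ) else 0)
            * ((μ[D₁ | 𝒢]) ω * (μ[D₂ | 𝒢]) ω) ∂μ := by
  set S := {ω | c₁ ≤ T ω ∧ T ω < c₂}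
  have hT𝒢 : Measurable[𝒢] T := by
    rw [h𝒢]
    exact measurable_fst.comp (comap_measurable _)
  have hS : MeasurableSet[𝒢] S :=
    (measurableSet_le measurable_const hT𝒢).inter (measurableSet_lt hT𝒢 measurable_const)
  have hcov := condExp_mul_sub_condExp_mul_sub_condExp_of_condIndepFun hV hD₁ hD₂ hVval hD₁val
    hD₂val hexcl (MAR.comp measurable_id measurable_fst) (MAR.comp measurable_id measurable_snd)
  calc _ = ∫ ω in S, V ω * (D₁ ω - μ[D₁ | 𝒢] ω) * (D₂ ω - μ[D₂ | 𝒢] ω) ∂μ := by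
        rw [← integral_indicator (h𝒢le _ hS)]
        congr 1 with ω
        by_cases h : c₁ ≤ T ω ∧ T ω < c₂
        · have hV2 : V ω * V ω = V ω := by rcases hVval ω with hv | hv <;> simp [hv]
          simp only [Set.indicator_of_mem (show ω ∈ S from h), if_pos h, if_pos h.1]
          linear_combination (D₁ ω - μ[D₁ | 𝒢] ω) * (D₂ ω - μ[D₂ | 𝒢] ω) * hV2
        · simp only [Set.indicator_of_notMem (show ω ∉ S from h), if_neg h, mul_zero, zero_mul]
    _ = ∫ ω in S, μ[fun ω => V ω * (D₁ ω - μ[D₁ | 𝒢] ω) * (D₂ ω - μ[D₂ | 𝒢] ω) | 𝒢] ω ∂μ :=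
        (setIntegral_condExp h𝒢le (integrable_mul_sub_condExp_mul_sub_condExp (m := 𝒢)
          hV hD₁ hD₂ hVval hD₁val hD₂val) hS).symm
    _ = ∫ ω in S, -(μ[V | 𝒢] ω * (μ[D₁ | 𝒢] ω * μ[D₂ | 𝒢] ω)) ∂μ :=
        integral_congr_ae (ae_restrict_of_ae hcov)
    _ = _ := by
        rw [integral_neg, ← integral_indicator (h𝒢le _ hS)]
        congr 2 with ω
        by_cases h : c₁ ≤ T ω ∧ T ω < c₂
        · simp only [Set.indicator_of_mem (show ω ∈ S from h), if_pos h, mul_one]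
        · simp only [Set.indicator_of_notMem (show ω ∉ S from h), if_neg h, mul_zero, zero_mul]

/-- Under MAR (with `V` conditionally independent of the pair
`(D₁, D₂)` given `𝒢`), for cut points `c₁ < c₂` and mutually exclusive class indicators
`D₁, D₂` (`D₁D₂ = 0` a.s.), the two mean-zero terms `V·1_{T ≥ c₁}·(D₁ − ρ₁)` and
`V·1_{c₁ ≤ T < c₂}·(D₂ − ρ₂)` have covariance
`E[(V 1_{T ≥ c₁}(D₁ − ρ₁)) · (V 1_{c₁ ≤ T < c₂}(D₂ − ρ₂))] = −E[π · 1_{c₁ ≤ T < c₂} · ρ₁ρ₂]`. -/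
theorem mar_covariance_S_terms
    {Ω : Type*} [mΩ : MeasurableSpace Ω] [StandardBorelSpace Ω] [Nonempty Ω]
    (μ : Measure Ω) [IsProbabilityMeasure μ] {d : ℕ}
    (T : Ω → ℝ) (A : Ω → (Fin d → ℝ)) (D₁ D₂ V : Ω → ℝ)
    (hT : Measurable T) (hA : Measurable A)
    (hD₁ : Measurable D₁) (hD₂ : Measurable D₂) (hV : Measurable V)
    (hD₁val : ∀ ω, D₁ ω = 0 ∨ D₁ ω = 1) (hD₂val : ∀ ω, D₂ ω = 0 ∨ D₂ ω = 1)
    (hVval : ∀ ω, V ω = 0 ∨ V ω = 1)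
    (hexcl : ∀ᵐ ω ∂μ, D₁ ω * D₂ ω = 0)
    (𝒢 : MeasurableSpace Ω)
    (h𝒢 : 𝒢 = MeasurableSpace.comap (fun ω => (T ω, A ω)) inferInstance)
    (h𝒢le : 𝒢 ≤ mΩ)
    (MAR : CondIndepFun (mΩ := mΩ) 𝒢 h𝒢le V (fun ω => (D₁ ω, D₂ ω)) μ)
    (c₁ c₂ : ℝ) (hc : c₁ < c₂) :
    ∫ ω, (V ω * (if c₁ ≤ T ω then (1 : ℝ) else 0) * (D₁ ω - (μ[D₁ | 𝒢]) ω))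
        * (V ω * (if c₁ ≤ T ω ∧ T ω < c₂ then (1 : ℝ) else 0) * (D₂ ω - (μ[D₂ | 𝒢]) ω)) ∂μ
      = - ∫ ω, (μ[V | 𝒢]) ω * (if c₁ ≤ T ω ∧ T ω < c₂ then (1 : ℝ) else 0)
            * ((μ[D₁ | 𝒢]) ω * (μ[D₂ | 𝒢]) ω) ∂μ :=
  mar_covariance_S_terms_general (mΩ := mΩ) μ T A D₁ D₂ V hD₁ hD₂ hV hD₁val hD₂val hVval hexcl 𝒢 h𝒢
    h𝒢le MAR c₁ c₂
end

section
/- Under the MAR assumption, for any real cut point c, E[ 1_{T ≥ c} · ( V·D + (1 − V)·ρ ) ] = ℙ(T ≥ c, D = 1); i.e. the mean-score single-observation term for β = ℙ(T ≥ c, D = 1) is unbiased. -/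
open MeasureTheory ProbabilityTheory

/-! Write `ρ = E[D | 𝒢]`. The integrand rearranges to `ρ + V (D - ρ)`. Under MAR,
`E[V D | 𝒢] = E[V | 𝒢] ρ = E[V ρ | 𝒢]`, so the score `V (D - ρ)` has conditional mean zero,
and integrating over the `𝒢`-measurable event `{T ≥ c}` leaves `∫_{T ≥ c} ρ = ∫_{T ≥ c} D`. -/

lemma norm_le_one_of_eq_zero_or_eq_one {x : ℝ} (hx : x = 0 ∨ x = 1) : ‖x‖ ≤ 1 := by
  rcases hx with rfl | rfl <;> simp

lemma eq_indicator_preimage_one_of_mem_zero_one {Ω : Type*} {f : Ω → ℝ}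
    (hf : ∀ ω, f ω = 0 ∨ f ω = 1) : f = (f ⁻¹' {1}).indicator 1 := by
  funext ω
  rcases hf ω with h | h <;> simp [h]

namespace MeasureTheory

variable {Ω : Type*} {mΩ : MeasurableSpace Ω} {μ : Measure Ω}

lemma integrable_of_mem_zero_one [IsFiniteMeasure μ] {f : Ω → ℝ} (hf : Measurable f)
    (hf01 : ∀ ω, f ω = 0 ∨ f ω = 1) : Integrable f μ :=
  .of_bound hf.aestronglyMeasurable 1
    (ae_of_all _ fun ω => norm_le_one_of_eq_zero_or_eq_one (hf01 ω))

lemma Integrable.mul_of_mem_zero_one {f g : Ω → ℝ} (hg : Integrable g μ) (hf : Measurable f)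
    (hf01 : ∀ ω, f ω = 0 ∨ f ω = 1) : Integrable (f * g) μ :=
  hg.bdd_mul (c := 1) hf.aestronglyMeasurable
    (ae_of_all _ fun ω => norm_le_one_of_eq_zero_or_eq_one (hf01 ω))

lemma integral_ite_one_mul {p : Ω → Prop} [DecidablePred p] (hp : MeasurableSet {ω | p ω})
    (f : Ω → ℝ) :
    ∫ ω, (if p ω then (1 : ℝ) else 0) * f ω ∂μ = ∫ ω in {ω | p ω}, f ω ∂μ := by
  rw [← integral_indicator hp]
  congr 1 with ω
  by_cases h : p ω <;> simp [h]

lemma setIntegral_eq_measureReal_inter_of_mem_zero_one {f : Ω → ℝ} (hf : Measurable f)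
    (hf01 : ∀ ω, f ω = 0 ∨ f ω = 1) {s : Set Ω} :
    ∫ ω in s, f ω ∂μ = μ.real (s ∩ {ω | f ω = 1}) := by
  have hmeas : MeasurableSet (f ⁻¹' {1}) := hf (measurableSet_singleton 1)
  rw [eq_indicator_preimage_one_of_mem_zero_one hf01, integral_indicator_one hmeas,
    measureReal_restrict_apply hmeas, Set.inter_comm]
  congr 2 with ω
  rcases hf01 ω with h | h <;> simp [h]

end MeasureTheory

namespace ProbabilityTheory

variable {Ω : Type*} {m mΩ : MeasurableSpace Ω} [StandardBorelSpace Ω]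
  {μ : Measure Ω} [IsFiniteMeasure μ] {V D : Ω → ℝ}

lemma CondIndepFun.condExp_mul_ae_eq_of_mem_zero_one {hm : m ≤ mΩ}
    (h : CondIndepFun m hm V D μ) (hV : Measurable V) (hD : Measurable D)
    (hV01 : ∀ ω, V ω = 0 ∨ V ω = 1) (hD01 : ∀ ω, D ω = 0 ∨ D ω = 1) :
    μ[V * D | m] =ᵐ[μ] μ[V | m] * μ[D | m] := by
  rw [eq_indicator_preimage_one_of_mem_zero_one hV01,
    eq_indicator_preimage_one_of_mem_zero_one hD01, ← Set.inter_indicator_one]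
  exact (condIndepFun_iff_condExp_inter_preimage_eq_mul hV hD).mp h {1} {1}
    (measurableSet_singleton 1) (measurableSet_singleton 1)

lemma CondIndepFun.condExp_mul_sub_condExp_ae_eq_zero {hm : m ≤ mΩ}
    (h : CondIndepFun m hm V D μ) (hV : Measurable V) (hD : Measurable D)
    (hV01 : ∀ ω, V ω = 0 ∨ V ω = 1) (hD01 : ∀ ω, D ω = 0 ∨ D ω = 1) :
    μ[V * (D - μ[D | m]) | m] =ᵐ[μ] 0 := by
  have hVD : Integrable (V * D) μ :=
    (integrable_of_mem_zero_one hD hD01).mul_of_mem_zero_one hV hV01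
  have hVρ : Integrable (V * μ[D | m]) μ := integrable_condExp.mul_of_mem_zero_one hV hV01
  calc μ[V * (D - μ[D | m]) | m]
      = μ[V * D - V * μ[D | m] | m] := by rw [mul_sub]
    _ =ᵐ[μ] μ[V * D | m] - μ[V * μ[D | m] | m] := condExp_sub hVD hVρ m
    _ =ᵐ[μ] μ[V | m] * μ[D | m] - μ[V | m] * μ[D | m] :=
      (h.condExp_mul_ae_eq_of_mem_zero_one hV hD hV01 hD01).sub
        (condExp_mul_of_stronglyMeasurable_right stronglyMeasurable_condExp hVρ
          (integrable_of_mem_zero_one hV hV01))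
    _ = 0 := sub_self _

lemma CondIndepFun.setIntegral_mul_sub_condExp_eq_zero {hm : m ≤ mΩ}
    (h : CondIndepFun m hm V D μ) (hV : Measurable V) (hD : Measurable D)
    (hV01 : ∀ ω, V ω = 0 ∨ V ω = 1) (hD01 : ∀ ω, D ω = 0 ∨ D ω = 1) {s : Set Ω}
    (hs : MeasurableSet[m] s) : ∫ ω in s, (V * (D - μ[D | m])) ω ∂μ = 0 := by
  have hscore : Integrable (V * (D - μ[D | m])) μ :=
    ((integrable_of_mem_zero_one hD hD01).sub integrable_condExp).mul_of_mem_zero_one hV hV01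
  rw [← setIntegral_condExp hm hscore hs, setIntegral_congr_ae (hm s hs)
    ((h.condExp_mul_sub_condExp_ae_eq_zero hV hD hV01 hD01).mono fun _ h _ => h)]
  simp

end ProbabilityTheory

theorem mar_mean_score_unbiased_beta_general
    {Ω : Type*} [mΩ : MeasurableSpace Ω] [StandardBorelSpace Ω]
    (μ : Measure Ω) [IsProbabilityMeasure μ] {d : ℕ}
    (T : Ω → ℝ) (A : Ω → (Fin d → ℝ)) (D V : Ω → ℝ)
    (hD : Measurable D) (hV : Measurable V)
    (hDval : ∀ ω, D ω = 0 ∨ D ω = 1) (hVval : ∀ ω, V ω = 0 ∨ V ω = 1)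
    (𝒢 : MeasurableSpace Ω)
    (h𝒢 : 𝒢 = MeasurableSpace.comap (fun ω => (T ω, A ω)) inferInstance)
    (h𝒢le : 𝒢 ≤ mΩ)
    (MAR : CondIndepFun (mΩ := mΩ) 𝒢 h𝒢le V D μ) (c : ℝ) :
    ∫ ω, (if c ≤ T ω then (1 : ℝ) else 0) * (V ω * D ω + (1 - V ω) * (μ[D | 𝒢]) ω) ∂μ
      = (μ {ω | c ≤ T ω ∧ D ω = 1}).toReal := by
  set ρ := μ[D | 𝒢]
  have hT : Measurable[𝒢] T := h𝒢 ▸ measurable_fst.comp (Measurable.of_comap_le le_rfl)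
  have hS : MeasurableSet[𝒢] {ω | c ≤ T ω} := hT measurableSet_Ici
  have hDint : Integrable D μ := integrable_of_mem_zero_one hD hDval
  calc _ = ∫ ω in {ω | c ≤ T ω}, (ρ ω + (V * (D - ρ)) ω) ∂μ := by
        rw [integral_ite_one_mul (h𝒢le _ hS)]
        congr 1 with ω
        simp only [Pi.mul_apply, Pi.sub_apply]
        ring
    _ = ∫ ω in {ω | c ≤ T ω}, D ω ∂μ := by
        rw [integral_add integrable_condExp.integrableOn
            ((hDint.sub integrable_condExp).mul_of_mem_zero_one hV hVval).integrableOn,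
          MAR.setIntegral_mul_sub_condExp_eq_zero hV hD hVval hDval hS,
          setIntegral_condExp h𝒢le hDint hS, add_zero]
    _ = _ := setIntegral_eq_measureReal_inter_of_mem_zero_one hD hDval

/-- Under MAR, for any real cut point `c`,
`E[1_{T ≥ c} · (V·D + (1 − V)·ρ)] = ℙ(T ≥ c, D = 1)`: the mean-score single-observation
term for `β = ℙ(T ≥ c, D = 1)` is unbiased. -/
theorem mar_mean_score_unbiased_beta
    {Ω : Type*} [mΩ : MeasurableSpace Ω] [StandardBorelSpace Ω] [Nonempty Ω]
    (μ : Measure Ω) [IsProbabilityMeasure μ] {d : ℕ}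
    (T : Ω → ℝ) (A : Ω → (Fin d → ℝ)) (D V : Ω → ℝ)
    (hT : Measurable T) (hA : Measurable A) (hD : Measurable D) (hV : Measurable V)
    (hDval : ∀ ω, D ω = 0 ∨ D ω = 1) (hVval : ∀ ω, V ω = 0 ∨ V ω = 1)
    (𝒢 : MeasurableSpace Ω)
    (h𝒢 : 𝒢 = MeasurableSpace.comap (fun ω => (T ω, A ω)) inferInstance)
    (h𝒢le : 𝒢 ≤ mΩ)
    (MAR : CondIndepFun (mΩ := mΩ) 𝒢 h𝒢le V D μ) (c : ℝ) :
    ∫ ω, (if c ≤ T ω then (1 : ℝ) else 0) * (V ω * D ω + (1 - V ω) * (μ[D | 𝒢]) ω) ∂μ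
      = (μ {ω | c ≤ T ω ∧ D ω = 1}).toReal :=
  mar_mean_score_unbiased_beta_general (mΩ := mΩ) μ T A D V hD hV hDval hVval 𝒢 h𝒢 h𝒢le MAR c
end

section
/- Under the MAR assumption, for any real cut point c, the covariance between M = V·D + (1 − V)·ρ and X = 1_{T ≥ c}·M equals Cov(M, X) = β(1 − θ) − E[ (1 − π) · 1_{T ≥ c} · ρ(1 − ρ) ], where θ = ℙ(D = 1) and β = ℙ(T ≥ c, D = 1). -/
open MeasureTheory ProbabilityTheory

section Aux

variable {Ω : Type*} {mΩ : MeasurableSpace Ω} {μ : Measure Ω} [IsProbabilityMeasure μ]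

lemma aux_integrable_of_bound {f : Ω → ℝ} {C : ℝ}
    (hf : AEStronglyMeasurable f μ) (h : ∀ᵐ ω ∂μ, |f ω| ≤ C) : Integrable f μ :=
  Integrable.mono' (integrable_const C) hf (h.mono fun ω hω => by
    simpa [Real.norm_eq_abs] using hω)

lemma aux_integral_mul_condexp {m : MeasurableSpace Ω} (hm : m ≤ mΩ) {f g : Ω → ℝ}
    (hf : StronglyMeasurable[m] f) (hfg : Integrable (f * g) μ) (hg : Integrable g μ) :
    ∫ ω, f ω * g ω ∂μ = ∫ ω, f ω * (μ[g|m]) ω ∂μ := by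
  have h1 : μ[f * g|m] =ᵐ[μ] f * μ[g|m] := condExp_mul_of_stronglyMeasurable_left hf hfg hg
  calc ∫ ω, f ω * g ω ∂μ = ∫ ω, (f * g) ω ∂μ := rfl
    _ = ∫ ω, (μ[f * g|m]) ω ∂μ := (integral_condExp hm).symm
    _ = ∫ ω, (f * μ[g|m]) ω ∂μ := integral_congr_ae h1
    _ = ∫ ω, f ω * (μ[g|m]) ω ∂μ := rfl

lemma aux_mem01_mul {a b : ℝ} (ha : 0 ≤ a ∧ a ≤ 1) (hb : 0 ≤ b ∧ b ≤ 1) :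
    0 ≤ a * b ∧ a * b ≤ 1 :=
  ⟨mul_nonneg ha.1 hb.1, mul_le_one₀ ha.2 hb.1 hb.2⟩

lemma aux_mem01_sub {a : ℝ} (ha : 0 ≤ a ∧ a ≤ 1) : 0 ≤ 1 - a ∧ 1 - a ≤ 1 := by
  constructor <;> linarith [ha.1, ha.2]

lemma aux_abs_le_one {a : ℝ} (ha : 0 ≤ a ∧ a ≤ 1) : |a| ≤ 1 :=
  abs_le.mpr ⟨by linarith [ha.1], ha.2⟩

end Aux

/-- Under MAR, for any real cut point `c`, the covariance between
`M = V·D + (1 − V)·ρ` and `X = 1_{T ≥ c}·M` equals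
`Cov(M, X) = β(1 − θ) − E[(1 − π) · 1_{T ≥ c} · ρ(1 − ρ)]`,
where `θ = ℙ(D = 1)` and `β = ℙ(T ≥ c, D = 1)`. -/
theorem mar_covariance_mean_score_theta_beta
    {Ω : Type*} [mΩ : MeasurableSpace Ω] [StandardBorelSpace Ω] [Nonempty Ω]
    (μ : Measure Ω) [IsProbabilityMeasure μ] {d : ℕ}
    (T : Ω → ℝ) (A : Ω → (Fin d → ℝ)) (D V : Ω → ℝ)
    (hT : Measurable T) (hA : Measurable A) (hD : Measurable D) (hV : Measurable V)
    (hDval : ∀ ω, D ω = 0 ∨ D ω = 1) (hVval : ∀ ω, V ω = 0 ∨ V ω = 1)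
    (𝒢 : MeasurableSpace Ω)
    (h𝒢 : 𝒢 = MeasurableSpace.comap (fun ω => (T ω, A ω)) inferInstance)
    (h𝒢le : 𝒢 ≤ mΩ)
    (MAR : CondIndepFun (mΩ := mΩ) 𝒢 h𝒢le V D μ) (c : ℝ) :
    (∫ ω, (V ω * D ω + (1 - V ω) * (μ[D | 𝒢]) ω)
          * ((if c ≤ T ω then (1 : ℝ) else 0) * (V ω * D ω + (1 - V ω) * (μ[D | 𝒢]) ω)) ∂μ)
      - (∫ ω, V ω * D ω + (1 - V ω) * (μ[D | 𝒢]) ω ∂μ)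
        * (∫ ω, (if c ≤ T ω then (1 : ℝ) else 0)
            * (V ω * D ω + (1 - V ω) * (μ[D | 𝒢]) ω) ∂μ)
      = (μ {ω | c ≤ T ω ∧ D ω = 1}).toReal * (1 - (μ {ω | D ω = 1}).toReal)
        - ∫ ω, (1 - (μ[V | 𝒢]) ω) * (if c ≤ T ω then (1 : ℝ) else 0)
            * ((μ[D | 𝒢]) ω * (1 - (μ[D | 𝒢]) ω)) ∂μ := by
  classical
  set ρ : Ω → ℝ := μ[D | 𝒢] with hρdef
  set π : Ω → ℝ := μ[V | 𝒢] with hπdef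
  set I : Ω → ℝ := fun ω => if c ≤ T ω then (1 : ℝ) else 0 with hIdef
  show (∫ ω, (V ω * D ω + (1 - V ω) * ρ ω) * (I ω * (V ω * D ω + (1 - V ω) * ρ ω)) ∂μ)
      - (∫ ω, V ω * D ω + (1 - V ω) * ρ ω ∂μ)
        * (∫ ω, I ω * (V ω * D ω + (1 - V ω) * ρ ω) ∂μ)
      = (μ {ω | c ≤ T ω ∧ D ω = 1}).toReal * (1 - (μ {ω | D ω = 1}).toReal)
        - ∫ ω, (1 - π ω) * I ω * (ρ ω * (1 - ρ ω)) ∂μ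
  -- measurability facts
  have hφ : Measurable[𝒢] fun ω => (T ω, A ω) := by
    rw [h𝒢]; exact Measurable.of_comap_le le_rfl
  have hTG : Measurable[𝒢] T := measurable_fst.comp hφ
  have hSG : MeasurableSet[𝒢] {ω | c ≤ T ω} := measurableSet_le measurable_const hTG
  have hIG : StronglyMeasurable[𝒢] I := by
    have : I = Set.indicator {ω | c ≤ T ω} (fun _ => (1 : ℝ)) := by
      funext ω; simp [hIdef, Set.indicator_apply, Set.mem_setOf_eq]
    rw [this]; exact stronglyMeasurable_const.indicator hSG
  have hρG : StronglyMeasurable[𝒢] ρ := stronglyMeasurable_condExp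
  have hπG : StronglyMeasurable[𝒢] π := stronglyMeasurable_condExp
  have hρm : Measurable[mΩ] ρ := (hρG.mono h𝒢le).measurable
  have hπm : Measurable[mΩ] π := (hπG.mono h𝒢le).measurable
  have hIm : Measurable[mΩ] I := (hIG.mono h𝒢le).measurable
  -- bounds
  have hD01 : ∀ ω, 0 ≤ D ω ∧ D ω ≤ 1 := fun ω => by
    rcases hDval ω with h | h <;> rw [h] <;> norm_num
  have hV01 : ∀ ω, 0 ≤ V ω ∧ V ω ≤ 1 := fun ω => by
    rcases hVval ω with h | h <;> rw [h] <;> norm_num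
  have hI01 : ∀ ω, 0 ≤ I ω ∧ I ω ≤ 1 := fun ω => by
    simp only [hIdef]; split_ifs <;> norm_num
  have hDint : Integrable D μ :=
    aux_integrable_of_bound hD.aestronglyMeasurable
      (Filter.Eventually.of_forall fun ω => aux_abs_le_one (hD01 ω))
  have hVint : Integrable V μ :=
    aux_integrable_of_bound hV.aestronglyMeasurable
      (Filter.Eventually.of_forall fun ω => aux_abs_le_one (hV01 ω))
  have hρ01 : ∀ᵐ ω ∂μ, 0 ≤ ρ ω ∧ ρ ω ≤ 1 := by
    have h0 : (0 : Ω → ℝ) ≤ᵐ[μ] ρ :=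
      condExp_nonneg (Filter.Eventually.of_forall fun ω => (hD01 ω).1)
    have h1 : ρ ≤ᵐ[μ] μ[(fun _ => (1 : ℝ)) | 𝒢] :=
      condExp_mono hDint (integrable_const 1)
        (Filter.Eventually.of_forall fun ω => (hD01 ω).2)
    have hc : μ[(fun _ => (1 : ℝ)) | 𝒢] = fun _ => (1 : ℝ) := condExp_const h𝒢le 1
    filter_upwards [h0, h1] with ω h0 h1
    rw [hc] at h1; exact ⟨h0, h1⟩
  have hπ01 : ∀ᵐ ω ∂μ, 0 ≤ π ω ∧ π ω ≤ 1 := by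
    have h0 : (0 : Ω → ℝ) ≤ᵐ[μ] π :=
      condExp_nonneg (Filter.Eventually.of_forall fun ω => (hV01 ω).1)
    have h1 : π ≤ᵐ[μ] μ[(fun _ => (1 : ℝ)) | 𝒢] :=
      condExp_mono hVint (integrable_const 1)
        (Filter.Eventually.of_forall fun ω => (hV01 ω).2)
    have hc : μ[(fun _ => (1 : ℝ)) | 𝒢] = fun _ => (1 : ℝ) := condExp_const h𝒢le 1
    filter_upwards [h0, h1] with ω h0 h1
    rw [hc] at h1; exact ⟨h0, h1⟩
  -- generic integrability
  have hInt : ∀ f : Ω → ℝ, Measurable[mΩ] f → (∀ᵐ ω ∂μ, 0 ≤ f ω ∧ f ω ≤ 1) → Integrable f μ :=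
    fun f hf hb => aux_integrable_of_bound hf.aestronglyMeasurable
      (hb.mono fun ω h => aux_abs_le_one h)
  -- MAR consequence: μ[V * D | 𝒢] = π * ρ a.e.
  have hVind : V = Set.indicator (V ⁻¹' {(1 : ℝ)}) (fun _ => (1 : ℝ)) := by
    funext ω; rcases hVval ω with h | h <;>
      simp [Set.indicator_apply, Set.mem_preimage, h]
  have hDind : D = Set.indicator (D ⁻¹' {(1 : ℝ)}) (fun _ => (1 : ℝ)) := by
    funext ω; rcases hDval ω with h | h <;>
      simp [Set.indicator_apply, Set.mem_preimage, h]
  have hVDind : (fun ω => V ω * D ω)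
      = Set.indicator (V ⁻¹' {(1 : ℝ)} ∩ D ⁻¹' {(1 : ℝ)}) (fun _ => (1 : ℝ)) := by
    funext ω; rcases hVval ω with h | h <;> rcases hDval ω with h' | h' <;>
      simp [Set.indicator_apply, Set.mem_inter_iff, Set.mem_preimage, h, h']
  have cVD : μ[(fun ω => V ω * D ω) | 𝒢] =ᵐ[μ] fun ω => π ω * ρ ω := by
    have hmar := (condIndepFun_iff_condExp_inter_preimage_eq_mul
      (μ := μ) (hm' := h𝒢le) hV hD).mp MAR {1} {1}
      (measurableSet_singleton 1) (measurableSet_singleton 1)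
    have e1 : μ[(fun ω => V ω * D ω) | 𝒢]
        = μ⟦V ⁻¹' {(1 : ℝ)} ∩ D ⁻¹' {(1 : ℝ)} | 𝒢⟧ :=
      congrArg (fun f : Ω → ℝ => μ[f | 𝒢]) hVDind
    have e2 : π = μ⟦V ⁻¹' {(1 : ℝ)} | 𝒢⟧ := by
      rw [hπdef]; exact congrArg (fun f : Ω → ℝ => μ[f | 𝒢]) hVind
    have e3 : ρ = μ⟦D ⁻¹' {(1 : ℝ)} | 𝒢⟧ := by
      rw [hρdef]; exact congrArg (fun f : Ω → ℝ => μ[f | 𝒢]) hDind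
    rw [e1, e2, e3]; exact hmar
  -- condexp of 1 - V
  have c1V : μ[(fun ω => (1 : ℝ) - V ω) | 𝒢] =ᵐ[μ] fun ω => 1 - π ω := by
    have h := condExp_sub (μ := μ) (m := 𝒢) (integrable_const (1 : ℝ)) hVint
    have e : μ[(fun ω => (1 : ℝ) - V ω) | 𝒢] = μ[(fun _ => (1 : ℝ)) - V | 𝒢] := rfl
    rw [e]
    refine h.trans ?_
    rw [condExp_const h𝒢le (1 : ℝ)]
    exact Filter.Eventually.of_forall fun ω => rfl
  -- integrabilities of products
  have hVDb : ∀ᵐ ω ∂μ, 0 ≤ V ω * D ω ∧ V ω * D ω ≤ 1 :=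
    Filter.Eventually.of_forall fun ω => aux_mem01_mul (hV01 ω) (hD01 ω)
  have hVDint : Integrable (fun ω => V ω * D ω) μ := hInt _ (hV.mul hD) hVDb
  have h1Vint : Integrable (fun ω => (1 : ℝ) - V ω) μ :=
    hInt _ (measurable_const.sub hV)
      (Filter.Eventually.of_forall fun ω => aux_mem01_sub (hV01 ω))
  -- key1: for 𝒢-measurable bounded f, ∫ f·(V·D) = ∫ f·(π·ρ)
  have key1 : ∀ f : Ω → ℝ, StronglyMeasurable[𝒢] f → (∀ᵐ ω ∂μ, 0 ≤ f ω ∧ f ω ≤ 1) →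
      ∫ ω, f ω * (V ω * D ω) ∂μ = ∫ ω, f ω * (π ω * ρ ω) ∂μ := by
    intro f hfG hfB
    have hfm : Measurable[mΩ] f := (hfG.mono h𝒢le).measurable
    have hint2 : Integrable (f * fun ω => V ω * D ω) μ := by
      refine hInt _ (hfm.mul (hV.mul hD)) ?_
      filter_upwards [hfB, hVDb] with ω h1 h2
      exact aux_mem01_mul h1 h2
    rw [aux_integral_mul_condexp h𝒢le hfG hint2 hVDint]
    refine integral_congr_ae ?_
    filter_upwards [cVD] with ω h
    rw [h]
  -- key2: for 𝒢-measurable bounded f, ∫ f·(1−V) = ∫ f·(1−π)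
  have key2 : ∀ f : Ω → ℝ, StronglyMeasurable[𝒢] f → (∀ᵐ ω ∂μ, 0 ≤ f ω ∧ f ω ≤ 1) →
      ∫ ω, f ω * (1 - V ω) ∂μ = ∫ ω, f ω * (1 - π ω) ∂μ := by
    intro f hfG hfB
    have hfm : Measurable[mΩ] f := (hfG.mono h𝒢le).measurable
    have hint2 : Integrable (f * fun ω => (1 : ℝ) - V ω) μ := by
      refine hInt _ (hfm.mul (measurable_const.sub hV)) ?_
      filter_upwards [hfB] with ω h1
      exact aux_mem01_mul h1 (aux_mem01_sub (hV01 ω))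
    rw [aux_integral_mul_condexp h𝒢le hfG hint2 h1Vint]
    refine integral_congr_ae ?_
    filter_upwards [c1V] with ω h
    rw [h]
  -- useful 𝒢-strongly measurable products
  have hIρG : StronglyMeasurable[𝒢] (fun ω => I ω * ρ ω) := hIG.mul hρG
  have hIρρG : StronglyMeasurable[𝒢] (fun ω => I ω * ρ ω * ρ ω) := (hIG.mul hρG).mul hρG
  have hIb : ∀ᵐ ω ∂μ, 0 ≤ I ω ∧ I ω ≤ 1 := Filter.Eventually.of_forall fun ω => hI01 ω
  have hIρb : ∀ᵐ ω ∂μ, 0 ≤ I ω * ρ ω ∧ I ω * ρ ω ≤ 1 := by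
    filter_upwards [hρ01] with ω h; exact aux_mem01_mul (hI01 ω) h
  have hIρρb : ∀ᵐ ω ∂μ, 0 ≤ I ω * ρ ω * ρ ω ∧ I ω * ρ ω * ρ ω ≤ 1 := by
    filter_upwards [hρ01] with ω h; exact aux_mem01_mul (aux_mem01_mul (hI01 ω) h) h
  -- more integrabilities
  have hπρint : Integrable (fun ω => π ω * ρ ω) μ := by
    refine hInt _ (hπm.mul hρm) ?_
    filter_upwards [hρ01, hπ01] with ω h1 h2; exact aux_mem01_mul h2 h1
  have hρ1πint : Integrable (fun ω => ρ ω * (1 - π ω)) μ := by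
    refine hInt _ (hρm.mul (measurable_const.sub hπm)) ?_
    filter_upwards [hρ01, hπ01] with ω h1 h2; exact aux_mem01_mul h1 (aux_mem01_sub h2)
  have hIπρint : Integrable (fun ω => I ω * (π ω * ρ ω)) μ := by
    refine hInt _ (hIm.mul (hπm.mul hρm)) ?_
    filter_upwards [hρ01, hπ01] with ω h1 h2
    exact aux_mem01_mul (hI01 ω) (aux_mem01_mul h2 h1)
  have hIρ1πint : Integrable (fun ω => I ω * ρ ω * (1 - π ω)) μ := by
    refine hInt _ ((hIm.mul hρm).mul (measurable_const.sub hπm)) ?_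
    filter_upwards [hρ01, hπ01] with ω h1 h2
    exact aux_mem01_mul (aux_mem01_mul (hI01 ω) h1) (aux_mem01_sub h2)
  have hIρρ1πint : Integrable (fun ω => I ω * ρ ω * ρ ω * (1 - π ω)) μ := by
    refine hInt _ (((hIm.mul hρm).mul hρm).mul (measurable_const.sub hπm)) ?_
    filter_upwards [hρ01, hπ01] with ω h1 h2
    exact aux_mem01_mul (aux_mem01_mul (aux_mem01_mul (hI01 ω) h1) h1) (aux_mem01_sub h2)
  have hIρint : Integrable (fun ω => I ω * ρ ω) μ := hInt _ (hIm.mul hρm) hIρb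
  have hC : Integrable (fun ω => (1 - π ω) * I ω * (ρ ω * (1 - ρ ω))) μ := by
    refine hInt _ (((measurable_const.sub hπm).mul hIm).mul
      (hρm.mul (measurable_const.sub hρm))) ?_
    filter_upwards [hρ01, hπ01] with ω h1 h2
    exact aux_mem01_mul (aux_mem01_mul (aux_mem01_sub h2) (hI01 ω))
      (aux_mem01_mul h1 (aux_mem01_sub h1))
  -- β and θ
  have hθ : ∫ ω, ρ ω ∂μ = (μ {ω | D ω = 1}).toReal := by
    have h1 : ∫ ω, ρ ω ∂μ = ∫ ω, D ω ∂μ := integral_condExp h𝒢le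
    have hsetD : MeasurableSet[mΩ] {ω | D ω = 1} := by
      have he : {ω | D ω = 1} = D ⁻¹' {(1 : ℝ)} := by ext ω; simp [Set.mem_preimage]
      rw [he]; exact hD (measurableSet_singleton 1)
    rw [h1]
    calc ∫ ω, D ω ∂μ = ∫ ω, Set.indicator {ω | D ω = 1} (1 : Ω → ℝ) ω ∂μ := by
          refine integral_congr_ae (Filter.Eventually.of_forall fun ω => ?_)
          rcases hDval ω with h | h <;> simp [Set.indicator_apply, Set.mem_setOf_eq, h]
      _ = (μ {ω | D ω = 1}).toReal := @integral_indicator_one Ω mΩ μ _ hsetD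
  have hβ : ∫ ω, I ω * ρ ω ∂μ = (μ {ω | c ≤ T ω ∧ D ω = 1}).toReal := by
    have h1 : ∫ ω, I ω * D ω ∂μ = ∫ ω, I ω * ρ ω ∂μ := by
      refine aux_integral_mul_condexp h𝒢le hIG ?_ hDint
      refine hInt _ (hIm.mul hD) ?_
      exact Filter.Eventually.of_forall fun ω => aux_mem01_mul (hI01 ω) (hD01 ω)
    rw [← h1]
    have h2 : (fun ω => I ω * D ω)
        = Set.indicator {ω | c ≤ T ω ∧ D ω = 1} (1 : Ω → ℝ) := by
      funext ω
      by_cases hc' : c ≤ T ω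
      · rcases hDval ω with h | h <;>
          simp [hIdef, Set.indicator_apply, Set.mem_setOf_eq, hc', h]
      · simp [hIdef, Set.indicator_apply, Set.mem_setOf_eq, hc']
    have hsetTD : MeasurableSet[mΩ] {ω | c ≤ T ω ∧ D ω = 1} := by
      have he : {ω | c ≤ T ω ∧ D ω = 1}
          = {ω | c ≤ T ω} ∩ D ⁻¹' {(1 : ℝ)} := by
        ext ω; simp [Set.mem_setOf_eq, Set.mem_preimage]
      rw [he]
      exact (measurableSet_le measurable_const hT).inter (hD (measurableSet_singleton 1))
    calc ∫ ω, I ω * D ω ∂μ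
        = ∫ ω, Set.indicator {ω | c ≤ T ω ∧ D ω = 1} (1 : Ω → ℝ) ω ∂μ := by rw [h2]
      _ = (μ {ω | c ≤ T ω ∧ D ω = 1}).toReal := @integral_indicator_one Ω mΩ μ _ hsetTD
  -- E1
  have hE1 : ∫ ω, V ω * D ω + (1 - V ω) * ρ ω ∂μ = ∫ ω, ρ ω ∂μ := by
    have hint1 : Integrable (fun ω => (1 - V ω) * ρ ω) μ := by
      refine hInt _ ((measurable_const.sub hV).mul hρm) ?_
      filter_upwards [hρ01] with ω h
      exact aux_mem01_mul (aux_mem01_sub (hV01 ω)) h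
    rw [integral_add hVDint hint1]
    have hA1 : ∫ ω, V ω * D ω ∂μ = ∫ ω, π ω * ρ ω ∂μ := by
      rw [← integral_condExp h𝒢le (μ := μ) (f := fun ω => V ω * D ω)]
      exact integral_congr_ae cVD
    have hA2 : ∫ ω, (1 - V ω) * ρ ω ∂μ = ∫ ω, ρ ω * (1 - π ω) ∂μ := by
      rw [show (fun ω => (1 - V ω) * ρ ω) = fun ω => ρ ω * (1 - V ω) from
        funext fun ω => mul_comm _ _]
      exact key2 ρ hρG hρ01
    rw [hA1, hA2, ← integral_add hπρint hρ1πint]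
    exact integral_congr_ae (Filter.Eventually.of_forall fun ω => by ring)
  -- E2
  have hE2 : ∫ ω, I ω * (V ω * D ω + (1 - V ω) * ρ ω) ∂μ = ∫ ω, I ω * ρ ω ∂μ := by
    have e : (fun ω => I ω * (V ω * D ω + (1 - V ω) * ρ ω))
        = fun ω => I ω * (V ω * D ω) + (I ω * ρ ω) * (1 - V ω) := funext fun ω => by ring
    rw [e]
    have hint1 : Integrable (fun ω => I ω * (V ω * D ω)) μ := by
      refine hInt _ (hIm.mul (hV.mul hD)) ?_
      exact Filter.Eventually.of_forall fun ω =>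
        aux_mem01_mul (hI01 ω) (aux_mem01_mul (hV01 ω) (hD01 ω))
    have hint2 : Integrable (fun ω => (I ω * ρ ω) * (1 - V ω)) μ := by
      refine hInt _ ((hIm.mul hρm).mul (measurable_const.sub hV)) ?_
      filter_upwards [hIρb] with ω h
      exact aux_mem01_mul h (aux_mem01_sub (hV01 ω))
    rw [integral_add hint1 hint2, key1 I hIG hIb, key2 _ hIρG hIρb,
      ← integral_add hIπρint hIρ1πint]
    exact integral_congr_ae (Filter.Eventually.of_forall fun ω => by ring)
  -- E3
  have hE3 : ∫ ω, (V ω * D ω + (1 - V ω) * ρ ω) * (I ω * (V ω * D ω + (1 - V ω) * ρ ω)) ∂μ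
      = ∫ ω, I ω * ρ ω ∂μ - ∫ ω, (1 - π ω) * I ω * (ρ ω * (1 - ρ ω)) ∂μ := by
    have e : (fun ω => (V ω * D ω + (1 - V ω) * ρ ω) * (I ω * (V ω * D ω + (1 - V ω) * ρ ω)))
        = fun ω => I ω * (V ω * D ω) + (I ω * ρ ω * ρ ω) * (1 - V ω) := by
      funext ω
      rcases hVval ω with h | h <;> rcases hDval ω with h' | h' <;> rw [h, h'] <;> ring
    rw [e]
    have hint1 : Integrable (fun ω => I ω * (V ω * D ω)) μ := by
      refine hInt _ (hIm.mul (hV.mul hD)) ?_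
      exact Filter.Eventually.of_forall fun ω =>
        aux_mem01_mul (hI01 ω) (aux_mem01_mul (hV01 ω) (hD01 ω))
    have hint2 : Integrable (fun ω => (I ω * ρ ω * ρ ω) * (1 - V ω)) μ := by
      refine hInt _ (((hIm.mul hρm).mul hρm).mul (measurable_const.sub hV)) ?_
      filter_upwards [hIρρb] with ω h
      exact aux_mem01_mul h (aux_mem01_sub (hV01 ω))
    rw [integral_add hint1 hint2, key1 I hIG hIb, key2 _ hIρρG hIρρb]
    -- now: ∫ I(πρ) + ∫ (Iρρ)(1−π) = ∫ Iρ − ∫ (1−π)I(ρ(1−ρ))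
    have hBC : (∫ ω, I ω * ρ ω * ρ ω * (1 - π ω) ∂μ)
        + ∫ ω, (1 - π ω) * I ω * (ρ ω * (1 - ρ ω)) ∂μ
        = ∫ ω, I ω * ρ ω * (1 - π ω) ∂μ := by
      rw [← integral_add hIρρ1πint hC]
      exact integral_congr_ae (Filter.Eventually.of_forall fun ω => by ring)
    have hABC : (∫ ω, I ω * (π ω * ρ ω) ∂μ) + ∫ ω, I ω * ρ ω * (1 - π ω) ∂μ
        = ∫ ω, I ω * ρ ω ∂μ := by
      rw [← integral_add hIπρint hIρ1πint]
      exact integral_congr_ae (Filter.Eventually.of_forall fun ω => by ring)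
    linarith [hBC, hABC]
  rw [hE1, hE2, hE3, hβ, hθ]
  ring
end
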